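/- Let n be a positive natural number, R > 0, a > 0 and s > 0. Let p₀ and q₀ be probability density functions on ℝⁿ that vanish outside the closed ball of radius R centered at the origin. Define the smoothed densities p(x) = ∫_{ℝⁿ} (2πs)^{-n/2} · exp(-‖x - a·x₀‖² / (2s)) · p₀(x₀) dx₀ and q(x) analogously with q₀ in place of p₀. Then for every x ∈ ℝⁿ, the gradients of the logarithms satisfy ‖∇ log p(x) - ∇ log q(x)‖ ≤ 2Ra/s. -/

import Mathlib

/-!
Differentiating under the integral sign, `∇ log p (x) = (m(x) - x) / s`, where `m(x)` is the mean
of `a • x₀` under the posterior density `x₀ ↦ exp (-‖x - a • x₀‖² / (2s)) p₀(x₀) / p(x)`. As `p₀` is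
supported in the ball of radius `R`, `m(x)` lies in the ball of radius `a R`; the term `-x / s` is
the same for `p` and `q`, so the two scores differ by `(m_p(x) - m_q(x)) / s`, of norm at most
`2 a R / s`.
-/

open MeasureTheory Real Filter Topology

noncomputable section

theorem MeasureTheory.Integrable.smul_of_norm_le_of_ne_zero {α F : Type*} [MeasurableSpace α]
    [NormedAddCommGroup F] [NormedSpace ℝ F] {μ : Measure α} {g : α → ℝ} {v : α → F} {C : ℝ}
    (hg : Integrable g μ) (hv : AEStronglyMeasurable v μ)
    (hvC : ∀ a, g a ≠ 0 → ‖v a‖ ≤ C) : Integrable (fun a => g a • v a) μ := by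
  refine (hg.norm.const_mul C).mono' (hg.aestronglyMeasurable.smul hv) (ae_of_all _ fun a => ?_)
  by_cases ha : g a = 0
  · simp [ha]
  · rw [norm_smul, mul_comm]
    exact mul_le_mul_of_nonneg_right (hvC a ha) (norm_nonneg _)

section Gradient

variable {E : Type*} [NormedAddCommGroup E] [InnerProductSpace ℝ E] [CompleteSpace E]

theorem HasGradientAt.log {f : E → ℝ} {g x : E} (hf : HasGradientAt f g x) (hx : f x ≠ 0) :
    HasGradientAt (fun y => Real.log (f y)) ((f x)⁻¹ • g) x := by
  rw [hasGradientAt_iff_hasFDerivAt] at hf ⊢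
  simpa using hf.log hx

theorem HasGradientAt.mul_const {f : E → ℝ} {g x : E} (hf : HasGradientAt f g x) (c : ℝ) :
    HasGradientAt (fun y => f y * c) (c • g) x := by
  rw [hasGradientAt_iff_hasFDerivAt] at hf ⊢
  simpa [mul_comm c] using hf.mul_const c

theorem hasGradientAt_integral_of_dominated_of_gradient_le {α : Type*} [MeasurableSpace α]
    {μ : Measure α} {F : E → α → ℝ} {F' : E → α → E} {x₀ : E} {s : Set E} {bound : α → ℝ}
    (hs : s ∈ 𝓝 x₀) (hF_meas : ∀ᶠ x in 𝓝 x₀, AEStronglyMeasurable (F x) μ)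
    (hF_int : Integrable (F x₀) μ) (hF'_meas : AEStronglyMeasurable (F' x₀) μ)
    (h_bound : ∀ᵐ a ∂μ, ∀ x ∈ s, ‖F' x a‖ ≤ bound a) (bound_integrable : Integrable bound μ)
    (h_diff : ∀ᵐ a ∂μ, ∀ x ∈ s, HasGradientAt (F · a) (F' x a) x) :
    HasGradientAt (fun x => ∫ a, F x a ∂μ) (∫ a, F' x₀ a ∂μ) x₀ := by
  have hF'_int : Integrable (F' x₀) μ :=
    bound_integrable.mono' hF'_meas (h_bound.mono fun a ha => ha x₀ (mem_of_mem_nhds hs))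
  rw [hasGradientAt_iff_hasFDerivAt]
  change HasFDerivAt _ (innerSL ℝ (∫ a, F' x₀ a ∂μ)) x₀
  rw [← (innerSL ℝ).integral_comp_comm hF'_int]
  refine hasFDerivAt_integral_of_dominated_of_fderiv_le hs hF_meas hF_int
    ((innerSL ℝ).continuous.comp_aestronglyMeasurable hF'_meas) ?_ bound_integrable
    (h_diff.mono fun a ha x hx => hasGradientAt_iff_hasFDerivAt.mp (ha x hx))
  filter_upwards [h_bound] with a ha x hx
  rw [LinearIsometryEquiv.norm_map]
  exact ha x hx

end Gradient

section GaussianSmoothing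

variable {E : Type*} [NormedAddCommGroup E]

def gaussianKernel (s : ℝ) (y z : E) : ℝ := exp (-‖y - z‖ ^ 2 / (2 * s))

theorem gaussianKernel_pos (s : ℝ) (y z : E) : 0 < gaussianKernel s y z := exp_pos _

theorem gaussianKernel_le_one {s : ℝ} (hs : 0 ≤ s) (y z : E) : gaussianKernel s y z ≤ 1 :=
  exp_le_one_iff.mpr <|
    div_nonpos_of_nonpos_of_nonneg (neg_nonpos.mpr (by positivity)) (by positivity)

theorem continuous_gaussianKernel (s : ℝ) (y : E) : Continuous (gaussianKernel s y) := by
  unfold gaussianKernel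
  fun_prop

variable [InnerProductSpace ℝ E]

theorem norm_smul_le_of_support_subset_closedBall {w : E → ℝ} {R : ℝ}
    (hw_supp : Function.support w ⊆ Metric.closedBall 0 R) (a : ℝ) {x₀ : E} (hx₀ : w x₀ ≠ 0) :
    ‖a • x₀‖ ≤ |a| * R := by
  rw [norm_smul, norm_eq_abs]
  gcongr
  simpa using hw_supp hx₀

theorem hasGradientAt_gaussianKernel [CompleteSpace E] (s : ℝ) (z y : E) :
    HasGradientAt (fun y => gaussianKernel s y z) (s⁻¹ • gaussianKernel s y z • (z - y)) y := by
  have hsq : HasFDerivAt (fun y => ‖y - z‖ ^ 2) (2 • innerSL ℝ (y - z)) y := by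
    simpa using ((hasFDerivAt_id y).sub_const z).norm_sq
  have hfun : (fun y => gaussianKernel s y z) = fun y => exp (-(2 * s)⁻¹ * ‖y - z‖ ^ 2) := by
    funext y
    rw [gaussianKernel, neg_div, div_eq_inv_mul, neg_mul]
  rw [hasGradientAt_iff_hasFDerivAt, hfun]
  refine (hsq.const_mul (-(2 * s)⁻¹)).exp.congr_fderiv ?_
  ext v
  simp [gaussianKernel, div_eq_inv_mul]
  ring

variable [MeasurableSpace E] {μ : Measure E} {a s R : ℝ} {w : E → ℝ}

def gaussianSmoothing (μ : Measure E) (a s : ℝ) (w : E → ℝ) (y : E) : ℝ :=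
  ∫ x₀, gaussianKernel s y (a • x₀) * w x₀ ∂μ

def gaussianPosteriorMean (μ : Measure E) (a s : ℝ) (w : E → ℝ) (y : E) : E :=
  (gaussianSmoothing μ a s w y)⁻¹ • ∫ x₀, (gaussianKernel s y (a • x₀) * w x₀) • a • x₀ ∂μ

theorem eq_gaussianSmoothing_const_mul {f w : E → ℝ} {C : ℝ}
    (hf : ∀ x, f x = ∫ x₀, C * exp (-‖x - a • x₀‖ ^ 2 / (2 * s)) * w x₀ ∂μ) :
    f = gaussianSmoothing μ a s (fun x₀ => C * w x₀) := by
  funext x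
  rw [hf, gaussianSmoothing]
  congr 1 with x₀
  rw [gaussianKernel]
  ring

variable [BorelSpace E]

theorem integrable_gaussianKernel_mul (hs : 0 ≤ s) (hw : Integrable w μ) (y : E) :
    Integrable (fun x₀ => gaussianKernel s y (a • x₀) * w x₀) μ := by
  refine hw.bdd_mul (c := 1)
    ((continuous_gaussianKernel s y).comp (continuous_const_smul a)).aestronglyMeasurable
    (ae_of_all _ fun x₀ => ?_)
  rw [norm_of_nonneg (gaussianKernel_pos s y _).le]
  exact gaussianKernel_le_one hs y _

theorem gaussianSmoothing_pos (hs : 0 ≤ s) (hw₀ : 0 ≤ w) (hw : Integrable w μ)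
    (hw_pos : 0 < ∫ x₀, w x₀ ∂μ) (y : E) : 0 < gaussianSmoothing μ a s w y := by
  have hsupp : Function.support (fun x₀ => gaussianKernel s y (a • x₀) * w x₀) =
      Function.support w := by
    ext x₀
    simp [(gaussianKernel_pos s y (a • x₀)).ne']
  rw [gaussianSmoothing, integral_pos_iff_support_of_nonneg
    (fun x₀ => mul_nonneg (gaussianKernel_pos s y _).le (hw₀ x₀))
    (integrable_gaussianKernel_mul hs hw y), hsupp]
  exact (integral_pos_iff_support_of_nonneg hw₀ hw).mp hw_pos

theorem norm_gaussianPosteriorMean_le (hs : 0 ≤ s) (hw₀ : 0 ≤ w) (hw : Integrable w μ)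
    (hw_pos : 0 < ∫ x₀, w x₀ ∂μ) (hw_supp : Function.support w ⊆ Metric.closedBall 0 R) (x : E) :
    ‖gaussianPosteriorMean μ a s w x‖ ≤ |a| * R := by
  have hf := gaussianSmoothing_pos hs hw₀ hw hw_pos x (a := a)
  rw [gaussianPosteriorMean, norm_smul, norm_inv, norm_of_nonneg hf.le, inv_mul_le_iff₀ hf]
  calc ‖∫ x₀, (gaussianKernel s x (a • x₀) * w x₀) • a • x₀ ∂μ‖
      ≤ ∫ x₀, |a| * R * (gaussianKernel s x (a • x₀) * w x₀) ∂μ := by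
        refine norm_integral_le_of_norm_le ((integrable_gaussianKernel_mul hs hw x).const_mul _)
          (ae_of_all _ fun x₀ => ?_)
        by_cases hx₀ : w x₀ = 0
        · simp [hx₀]
        rw [norm_smul, norm_of_nonneg (mul_nonneg (gaussianKernel_pos s x _).le (hw₀ x₀)),
          mul_comm]
        gcongr
        · exact mul_nonneg (gaussianKernel_pos s x _).le (hw₀ x₀)
        · exact norm_smul_le_of_support_subset_closedBall hw_supp a hx₀
    _ = gaussianSmoothing μ a s w x * (|a| * R) := by rw [integral_const_mul, mul_comm]; rfl

variable [CompleteSpace E] [SecondCountableTopology E]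

theorem hasGradientAt_gaussianSmoothing (hs : 0 ≤ s) (hw : Integrable w μ)
    (hw_supp : Function.support w ⊆ Metric.closedBall 0 R) (x : E) :
    HasGradientAt (gaussianSmoothing μ a s w)
      (s⁻¹ • ∫ x₀, (gaussianKernel s x (a • x₀) * w x₀) • (a • x₀ - x) ∂μ) x := by
  rw [← integral_smul]
  have hweight_meas := (integrable_gaussianKernel_mul hs hw x (a := a)).aestronglyMeasurable
  refine hasGradientAt_integral_of_dominated_of_gradient_le (Metric.ball_mem_nhds x one_pos)
    (F' := fun y x₀ => s⁻¹ • (gaussianKernel s y (a • x₀) * w x₀) • (a • x₀ - y))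
    (bound := fun x₀ => s⁻¹ * (|a| * R + ‖x‖ + 1) * ‖w x₀‖)
    (Eventually.of_forall fun y => (integrable_gaussianKernel_mul hs hw y).aestronglyMeasurable)
    (integrable_gaussianKernel_mul hs hw x)
    (by fun_prop)
    (ae_of_all _ fun x₀ y hy => ?_) (hw.norm.const_mul _)
    (ae_of_all _ fun x₀ y _ => ?_)
  · by_cases hx₀ : w x₀ = 0
    · simp [hx₀]
    have hy : ‖y‖ ≤ ‖x‖ + 1 := by
      have := mem_ball_iff_norm.mp hy
      linarith [norm_le_insert' y x]
    rw [norm_smul, norm_smul, norm_mul, norm_inv, norm_of_nonneg hs,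
      norm_of_nonneg (gaussianKernel_pos s y _).le]
    have hax₀ := norm_smul_le_of_support_subset_closedBall hw_supp a hx₀
    have hk := gaussianKernel_le_one hs y (a • x₀)
    have hd : ‖a • x₀ - y‖ ≤ |a| * R + ‖x‖ + 1 := (norm_sub_le _ _).trans (by linarith)
    calc s⁻¹ * (gaussianKernel s y (a • x₀) * ‖w x₀‖ * ‖a • x₀ - y‖)
        ≤ s⁻¹ * (1 * ‖w x₀‖ * (|a| * R + ‖x‖ + 1)) := by gcongr
      _ = s⁻¹ * (|a| * R + ‖x‖ + 1) * ‖w x₀‖ := by ring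
  · convert (hasGradientAt_gaussianKernel s (a • x₀) y).mul_const (w x₀) using 1
    simp only [smul_smul]
    congr 1
    ring

theorem hasGradientAt_log_gaussianSmoothing (hs : 0 ≤ s) (hw₀ : 0 ≤ w) (hw : Integrable w μ)
    (hw_pos : 0 < ∫ x₀, w x₀ ∂μ) (hw_supp : Function.support w ⊆ Metric.closedBall 0 R) (x : E) :
    HasGradientAt (fun y => log (gaussianSmoothing μ a s w y))
      (s⁻¹ • (gaussianPosteriorMean μ a s w x - x)) x := by
  have hf := gaussianSmoothing_pos hs hw₀ hw hw_pos x (a := a)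
  have hk := integrable_gaussianKernel_mul hs hw x (a := a)
  have hmean : Integrable (fun x₀ => (gaussianKernel s x (a • x₀) * w x₀) • a • x₀) μ :=
    hk.smul_of_norm_le_of_ne_zero (by fun_prop) fun x₀ hx₀ =>
      norm_smul_le_of_support_subset_closedBall hw_supp a (right_ne_zero_of_mul hx₀)
  have hsplit : ∫ x₀, (gaussianKernel s x (a • x₀) * w x₀) • (a • x₀ - x) ∂μ =
      ∫ x₀, (gaussianKernel s x (a • x₀) * w x₀) • a • x₀ ∂μ - gaussianSmoothing μ a s w x • x := by
    simp_rw [smul_sub]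
    rw [integral_sub hmean (hk.smul_const x), integral_smul_const, gaussianSmoothing]
  convert (hasGradientAt_gaussianSmoothing hs hw hw_supp x).log hf.ne' using 1
  rw [hsplit, gaussianPosteriorMean, smul_comm _ s⁻¹, smul_sub (gaussianSmoothing μ a s w x)⁻¹,
    smul_smul _ (gaussianSmoothing μ a s w x), inv_mul_cancel₀ hf.ne', one_smul]

theorem norm_gradient_log_gaussianSmoothing_sub_le {v : E → ℝ} (hs : 0 ≤ s)
    (hw₀ : 0 ≤ w) (hw : Integrable w μ) (hw_pos : 0 < ∫ x₀, w x₀ ∂μ)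
    (hw_supp : Function.support w ⊆ Metric.closedBall 0 R)
    (hv₀ : 0 ≤ v) (hv : Integrable v μ) (hv_pos : 0 < ∫ x₀, v x₀ ∂μ)
    (hv_supp : Function.support v ⊆ Metric.closedBall 0 R) (x : E) :
    ‖gradient (fun y => log (gaussianSmoothing μ a s w y)) x -
        gradient (fun y => log (gaussianSmoothing μ a s v y)) x‖ ≤ 2 * |a| * R / s := by
  rw [(hasGradientAt_log_gaussianSmoothing hs hw₀ hw hw_pos hw_supp x).gradient,
    (hasGradientAt_log_gaussianSmoothing hs hv₀ hv hv_pos hv_supp x).gradient, ← smul_sub,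
    sub_sub_sub_cancel_right, norm_smul, norm_inv, norm_of_nonneg hs]
  have hw_mean := norm_gaussianPosteriorMean_le hs hw₀ hw hw_pos hw_supp x (a := a)
  have hv_mean := norm_gaussianPosteriorMean_le hs hv₀ hv hv_pos hv_supp x (a := a)
  calc s⁻¹ * ‖gaussianPosteriorMean μ a s w x - gaussianPosteriorMean μ a s v x‖
      ≤ s⁻¹ * (|a| * R + |a| * R) := by
        gcongr
        exact (norm_sub_le _ _).trans (add_le_add hw_mean hv_mean)
    _ = 2 * |a| * R / s := by ring

end GaussianSmoothing

theorem vp_score_mse_bound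
    (n : ℕ) (R a s : ℝ) (ha : 0 < a) (hs : 0 < s)
    (p₀ q₀ : EuclideanSpace ℝ (Fin n) → ℝ)
    (hp₀nonneg : ∀ x, 0 ≤ p₀ x) (hq₀nonneg : ∀ x, 0 ≤ q₀ x)
    (hp₀int : Integrable p₀) (hq₀int : Integrable q₀)
    (hp₀one : ∫ x, p₀ x = 1) (hq₀one : ∫ x, q₀ x = 1)
    (hp₀supp : ∀ x, x ∉ Metric.closedBall (0 : EuclideanSpace ℝ (Fin n)) R → p₀ x = 0)
    (hq₀supp : ∀ x, x ∉ Metric.closedBall (0 : EuclideanSpace ℝ (Fin n)) R → q₀ x = 0)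
    (p q : EuclideanSpace ℝ (Fin n) → ℝ)
    (hp : ∀ x, p x =
      ∫ x₀, (2 * π * s) ^ (-(n : ℝ) / 2) * Real.exp (-‖x - a • x₀‖ ^ 2 / (2 * s)) * p₀ x₀)
    (hq : ∀ x, q x =
      ∫ x₀, (2 * π * s) ^ (-(n : ℝ) / 2) * Real.exp (-‖x - a • x₀‖ ^ 2 / (2 * s)) * q₀ x₀) :
    ∀ x : EuclideanSpace ℝ (Fin n),
      ‖gradient (fun y => Real.log (p y)) x - gradient (fun y => Real.log (q y)) x‖
        ≤ 2 * R * a / s := by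
  intro x
  set C := (2 * π * s) ^ (-(n : ℝ) / 2)
  have hC : 0 < C := by positivity
  rw [eq_gaussianSmoothing_const_mul hp, eq_gaussianSmoothing_const_mul hq]
  refine (norm_gradient_log_gaussianSmoothing_sub_le hs.le
    (fun x₀ => mul_nonneg hC.le (hp₀nonneg x₀)) (hp₀int.const_mul C)
    (by rwa [integral_const_mul, hp₀one, mul_one])
    ((Function.support_mul_subset_right _ _).trans (Function.support_subset_iff'.mpr hp₀supp))
    (fun x₀ => mul_nonneg hC.le (hq₀nonneg x₀)) (hq₀int.const_mul C)
    (by rwa [integral_const_mul, hq₀one, mul_one])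
    ((Function.support_mul_subset_right _ _).trans (Function.support_subset_iff'.mpr hq₀supp))
    x).trans_eq ?_
  rw [abs_of_pos ha]
  ring

end
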